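/- Let K be a nowhere-vanishing Killing field on an open set U ⊆ ℝ³ and let f, g : U → ℝ be smooth functions with ⟨K, ∇f⟩ = 0 and ⟨K, ∇g⟩ = 0 on U. Then div(∇⊥f) = 0 and div(gK) = 0 on U. -/

import Mathlib

noncomputable section

/-- Vectors in ℝ³. -/
abbrev V3 : Type := Fin 3 → ℝ

/-- Euclidean inner product on ℝ³. -/
def dot3 (u v : V3) : ℝ := ∑ i, u i * v i

/-- Cross product on ℝ³. -/
def cross3 (u v : V3) : V3 :=
  ![u 1 * v 2 - u 2 * v 1, u 2 * v 0 - u 0 * v 2, u 0 * v 1 - u 1 * v 0]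

/-- Partial derivative ∂ᵢ of a scalar function. -/
def pd (i : Fin 3) (f : V3 → ℝ) (x : V3) : ℝ := fderiv ℝ f x (Pi.single i 1)

/-- Gradient of a scalar function. -/
def grad3 (f : V3 → ℝ) (x : V3) : V3 := fun i => pd i f x

/-- Divergence of a vector field. -/
def div3 (X : V3 → V3) (x : V3) : ℝ := ∑ i, fderiv ℝ X x (Pi.single i 1) i

/-- Curl of a vector field. -/
def curl3 (X : V3 → V3) (x : V3) : V3 :=
  ![pd 1 (fun y => X y 2) x - pd 2 (fun y => X y 1) x,
    pd 2 (fun y => X y 0) x - pd 0 (fun y => X y 2) x,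
    pd 0 (fun y => X y 1) x - pd 1 (fun y => X y 0) x]

/-- Lie bracket of vector fields: [X,Y](x) = DY(x)X(x) − DX(x)Y(x). -/
def bracket3 (X Y : V3 → V3) (x : V3) : V3 := fderiv ℝ Y x (X x) - fderiv ℝ X x (Y x)

/-- `K` is a Killing field of the Euclidean metric on `U`: `DK(x)` is antisymmetric on `U`. -/
def IsKillingOn (K : V3 → V3) (U : Set V3) : Prop :=
  ∀ x ∈ U, ∀ v w : V3, dot3 (fderiv ℝ K x v) w + dot3 v (fderiv ℝ K x w) = 0

/-- Skew gradient ∇⊥h = (K × ∇h)/|K|². -/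
def skewGrad (K : V3 → V3) (h : V3 → ℝ) (x : V3) : V3 :=
  (dot3 (K x) (K x))⁻¹ • cross3 (K x) (grad3 h x)

/-- Poisson bracket {f,g} = ⟨∇⊥f, ∇g⟩. -/
def pbracket (K : V3 → V3) (f g : V3 → ℝ) (x : V3) : ℝ :=
  dot3 (skewGrad K f x) (grad3 g x)

/-- The K-Laplacian Δ_K f = div(∇f/|K|²). -/
def lapK (K : V3 → V3) (f : V3 → ℝ) (x : V3) : ℝ :=
  div3 (fun y => (dot3 (K y) (K y))⁻¹ • grad3 f y) x

/-- φ = ⟨curl K, K⟩/|K|². -/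
def phiK (K : V3 → V3) (x : V3) : ℝ := dot3 (curl3 K x) (K x) / dot3 (K x) (K x)

/-! Both identities come from `div (φ X) = φ div X + ⟨∇φ, X⟩`. Since `DK` is skew, `div K = tr DK = 0`,
which settles `div (g K)`, and `DK v = ½ curl K × v`, so `∇|K|² = K × curl K`. As `curl ∇f = 0`,
`div (K × ∇f) = ⟨∇f, curl K⟩`, and the Lagrange identity gives
`div ∇⊥f = |K|⁻²⟨∇f, curl K⟩ - |K|⁻⁴⟨K × curl K, K × ∇f⟩ = |K|⁻⁴⟨K, ∇f⟩⟨curl K, K⟩ = 0`. -/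

open Matrix Topology

theorem dot3_eq_dotProduct (u v : V3) : dot3 u v = u ⬝ᵥ v := rfl

theorem cross3_eq_crossProduct (u v : V3) : cross3 u v = u ⨯₃ v := rfl

theorem dot3_comm (u v : V3) : dot3 u v = dot3 v u :=
  dotProduct_comm u v

theorem dot3_single_right (u : V3) (j : Fin 3) : dot3 u (Pi.single j 1) = u j := by
  simp [dot3, Pi.single_apply]

theorem dot3_single_left (u : V3) (j : Fin 3) : dot3 (Pi.single j 1) u = u j := by
  simp [dot3, Pi.single_apply]

theorem pd_apply {X : V3 → V3} {x : V3} (hX : DifferentiableAt ℝ X x) (i j : Fin 3) :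
    pd j (fun y => X y i) x = fderiv ℝ X x (Pi.single j 1) i := by
  rw [pd, fderiv_apply hX i]
  rfl

section Bilinear

variable {E F₁ F₂ G : Type*} [NormedAddCommGroup E] [NormedSpace ℝ E]
  [NormedAddCommGroup F₁] [NormedSpace ℝ F₁] [FiniteDimensional ℝ F₁]
  [NormedAddCommGroup F₂] [NormedSpace ℝ F₂] [FiniteDimensional ℝ F₂]
  [NormedAddCommGroup G] [NormedSpace ℝ G]
  (B : F₁ →ₗ[ℝ] F₂ →ₗ[ℝ] G) {A : E → F₁} {C : E → F₂} {x : E}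

theorem fderiv_bilinear_apply (hA : DifferentiableAt ℝ A x) (hC : DifferentiableAt ℝ C x)
    (v : E) :
    fderiv ℝ (fun y => B (A y) (C y)) x v = B (A x) (fderiv ℝ C x v) + B (fderiv ℝ A x v) (C x) := by
  change fderiv ℝ (fun y => B.toContinuousBilinearMap (A y) (C y)) x v = _
  rw [ContinuousLinearMap.fderiv_of_bilinear _ hA hC]
  rfl

theorem differentiableAt_bilinear (hA : DifferentiableAt ℝ A x) (hC : DifferentiableAt ℝ C x) :
    DifferentiableAt ℝ (fun y => B (A y) (C y)) x :=
  (B.toContinuousBilinearMap.hasFDerivAt_of_bilinear hA.hasFDerivAt hC.hasFDerivAt).differentiableAt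

end Bilinear

theorem grad3_inv {φ : V3 → ℝ} {x : V3} (hφ : DifferentiableAt ℝ φ x) (h0 : φ x ≠ 0) :
    grad3 (fun y => (φ y)⁻¹) x = -(φ x ^ 2)⁻¹ • grad3 φ x := by
  ext j
  simp [grad3, pd, fderiv_fun_comp x (differentiableAt_inv h0) hφ, fderiv_inv, mul_comm]

theorem differentiableAt_grad3 {f : V3 → ℝ} {x : V3} (hf : ContDiffAt ℝ 2 f x) :
    DifferentiableAt ℝ (grad3 f) x := by
  have hdf : DifferentiableAt ℝ (fderiv ℝ f) x :=
    (hf.fderiv_right le_rfl).differentiableAt one_ne_zero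
  exact differentiableAt_pi.2 fun i => hdf.clm_apply (differentiableAt_const _)

theorem curl3_grad3 {f : V3 → ℝ} {x : V3} (hf : ContDiffAt ℝ 2 f x) : curl3 (grad3 f) x = 0 := by
  have hdf : DifferentiableAt ℝ (fderiv ℝ f) x :=
    (hf.fderiv_right le_rfl).differentiableAt one_ne_zero
  have hsymm := hf.isSymmSndFDerivAt (by simp)
  have hpd : ∀ i j, pd i (fun y => grad3 f y j) x
      = fderiv ℝ (fderiv ℝ f) x (Pi.single i 1) (Pi.single j 1) := by
    intro i j
    simp [grad3, pd, fderiv_clm_apply hdf (differentiableAt_const _)]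
  have hcomm : ∀ i j, pd i (fun y => grad3 f y j) x = pd j (fun y => grad3 f y i) x := by
    intro i j
    rw [hpd, hpd, hsymm.eq]
  ext i
  fin_cases i <;> simp [curl3, hcomm 2 1, hcomm 0 2, hcomm 1 0]

theorem div3_smul {φ : V3 → ℝ} {X : V3 → V3} {x : V3} (hφ : DifferentiableAt ℝ φ x)
    (hX : DifferentiableAt ℝ X x) :
    div3 (fun y => φ y • X y) x = φ x * div3 X x + dot3 (grad3 φ x) (X x) := by
  simp [div3, fderiv_fun_smul hφ hX, grad3, pd, dot3, Finset.mul_sum, Finset.sum_add_distrib]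

theorem div3_cross {A B : V3 → V3} {x : V3} (hA : DifferentiableAt ℝ A x)
    (hB : DifferentiableAt ℝ B x) :
    div3 (fun y => cross3 (A y) (B y)) x = dot3 (B x) (curl3 A x) - dot3 (A x) (curl3 B x) := by
  have hcross : (fun y => cross3 (A y) (B y)) = fun y => A y ⨯₃ B y := rfl
  simp only [div3, hcross, fderiv_bilinear_apply crossProduct hA hB]
  simp only [curl3, pd_apply hA, pd_apply hB, cross_apply, dot3, Fin.sum_univ_three, Pi.add_apply,
    cons_val_zero, cons_val_one, cons_val]
  ring

def IsSkew (A : V3 →L[ℝ] V3) : Prop :=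
  ∀ v w, dot3 (A v) w + dot3 v (A w) = 0

namespace IsSkew

variable {A : V3 →L[ℝ] V3}

theorem apply_single_add (h : IsSkew A) (i j : Fin 3) :
    A (Pi.single i 1) j + A (Pi.single j 1) i = 0 := by
  simpa [dot3_single_left, dot3_single_right] using h (Pi.single i 1) (Pi.single j 1)

theorem apply_single_self (h : IsSkew A) (i : Fin 3) : A (Pi.single i 1) i = 0 := by
  linarith [h.apply_single_add i i]

end IsSkew

theorem div3_eq_zero_of_isSkew {X : V3 → V3} {x : V3} (h : IsSkew (fderiv ℝ X x)) :
    div3 X x = 0 :=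
  Finset.sum_eq_zero fun i _ => h.apply_single_self i

theorem two_smul_fderiv_apply_eq_curl3_cross {K : V3 → V3} {x : V3}
    (hK : DifferentiableAt ℝ K x) (h : IsSkew (fderiv ℝ K x)) (v : V3) :
    (2 : ℝ) • fderiv ℝ K x v = cross3 (curl3 K x) v := by
  have h01 := h.apply_single_add 0 1
  have h02 := h.apply_single_add 0 2
  have h12 := h.apply_single_add 1 2
  have h0 := h.apply_single_self 0
  have h1 := h.apply_single_self 1
  have h2 := h.apply_single_self 2
  conv_lhs => rw [pi_eq_sum_univ' v]
  ext i
  fin_cases i <;>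
    simp only [curl3, pd_apply hK, cross3, Fin.sum_univ_three, map_add, map_smul, Pi.smul_apply,
      Pi.add_apply, smul_eq_mul, cons_val_zero, cons_val_one, cons_val, Fin.zero_eta, Fin.mk_one,
      Fin.reduceFinMk, Fin.isValue]
  · linear_combination 2 * v 0 * h0 + v 1 * h01 + v 2 * h02
  · linear_combination v 0 * h01 + 2 * v 1 * h1 + v 2 * h12
  · linear_combination v 0 * h02 + v 1 * h12 + 2 * v 2 * h2

theorem grad3_dot3_self {K : V3 → V3} {x : V3}
    (hK : DifferentiableAt ℝ K x) (h : IsSkew (fderiv ℝ K x)) :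
    grad3 (fun y => dot3 (K y) (K y)) x = cross3 (K x) (curl3 K x) := by
  ext j
  have hdot : (fun y => dot3 (K y) (K y)) = fun y => dotProductBilin ℝ ℝ (K y) (K y) := rfl
  have hcurl := congrFun (two_smul_fderiv_apply_eq_curl3_cross hK h (K x)) j
  have hskew := h (Pi.single j 1) (K x)
  rw [show cross3 (K x) (curl3 K x) = -cross3 (curl3 K x) (K x) from (cross_anticomm _ _).symm,
    Pi.neg_apply, ← hcurl]
  simp only [grad3, pd, hdot, fderiv_bilinear_apply _ hK hK]
  simp only [dot3_single_left, smul_eq_mul, Pi.smul_apply] at hskew ⊢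
  change dot3 (K x) _ + dot3 _ (K x) = _
  rw [dot3_comm (K x)]
  linarith

theorem div3_skewGrad_eq_zero {K : V3 → V3} {f : V3 → ℝ} {x : V3}
    (hK : DifferentiableAt ℝ K x) (hskew : IsSkew (fderiv ℝ K x)) (hK0 : K x ≠ 0)
    (hf : ContDiffAt ℝ 2 f x) (hKf : dot3 (K x) (grad3 f x) = 0) :
    div3 (skewGrad K f) x = 0 := by
  have hs : DifferentiableAt ℝ (fun y => dot3 (K y) (K y)) x :=
    differentiableAt_bilinear (dotProductBilin ℝ ℝ) hK hK
  have hs0 : dot3 (K x) (K x) ≠ 0 := dotProduct_self_eq_zero.not.2 hK0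
  have hcross : DifferentiableAt ℝ (fun y => cross3 (K y) (grad3 f y)) x :=
    differentiableAt_bilinear crossProduct hK (differentiableAt_grad3 hf)
  rw [show skewGrad K f = fun y => (dot3 (K y) (K y))⁻¹ • cross3 (K y) (grad3 f y) from rfl,
    div3_smul (hs.fun_inv hs0) hcross, div3_cross hK (differentiableAt_grad3 hf), curl3_grad3 hf,
    grad3_inv hs hs0, grad3_dot3_self hK hskew]
  simp only [dot3_eq_dotProduct, cross3_eq_crossProduct] at hKf hs0 ⊢
  rw [smul_dotProduct, cross_dot_cross, dotProduct_zero, dotProduct_comm (grad3 f x), hKf,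
    smul_eq_mul]
  field_simp
  ring

theorem div3_smul_eq_zero_of_isSkew {K : V3 → V3} {g : V3 → ℝ} {x : V3}
    (hK : DifferentiableAt ℝ K x) (hskew : IsSkew (fderiv ℝ K x)) (hg : DifferentiableAt ℝ g x)
    (hKg : dot3 (K x) (grad3 g x) = 0) :
    div3 (fun y => g y • K y) x = 0 := by
  rw [div3_smul hg hK, div3_eq_zero_of_isSkew hskew, dot3_comm, hKg, mul_zero, add_zero]

/-- for a nowhere-vanishing Killing field K on an open set U and smooth
functions f, g with K(f) = K(g) = 0, one has div(∇⊥f) = 0 and div(gK) = 0 on U. -/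
theorem div_skewGrad_and_div_gK (U : Set V3) (hU : IsOpen U)
    (K : V3 → V3) (hKsmooth : ContDiffOn ℝ (⊤ : ℕ∞) K U)
    (hKill : IsKillingOn K U) (hKne : ∀ x ∈ U, K x ≠ 0)
    (f g : V3 → ℝ)
    (hf : ContDiffOn ℝ (⊤ : ℕ∞) f U) (hg : ContDiffOn ℝ (⊤ : ℕ∞) g U)
    (hKf : ∀ x ∈ U, dot3 (K x) (grad3 f x) = 0)
    (hKg : ∀ x ∈ U, dot3 (K x) (grad3 g x) = 0) :
    ∀ x ∈ U,
      div3 (skewGrad K f) x = 0 ∧ div3 (fun y => g y • K y) x = 0 := by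
  intro x hx
  have hUx : U ∈ 𝓝 x := hU.mem_nhds hx
  have hKx : DifferentiableAt ℝ K x := (hKsmooth.contDiffAt hUx).differentiableAt (by simp)
  exact ⟨div3_skewGrad_eq_zero hKx (hKill x hx) (hKne x hx)
      ((hf.contDiffAt hUx).of_le (WithTop.coe_le_coe.mpr le_top)) (hKf x hx),
    div3_smul_eq_zero_of_isSkew hKx (hKill x hx)
      ((hg.contDiffAt hUx).differentiableAt (by simp)) (hKg x hx)⟩
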